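/- arXiv:1412.5761 — 5 statements merged into one kernel-verified Lean document; each statement's English description precedes it below -/
import Mathlib

section
/- Let X and Y be Banach spaces over ℝ. If X is almost reflexive and Y has the Schur property, then every bounded linear operator T : X → Y is a compact operator. -/
open Filter Topology

section Defs

variable {E : Type*} [NormedAddCommGroup E] [NormedSpace ℝ E]
variable {F : Type*} [NormedAddCommGroup F] [NormedSpace ℝ F]

/-- A sequence converges weakly to `x₀`. -/
def WeakConvTo (x : ℕ → E) (x₀ : E) : Prop :=
  ∀ f : E →L[ℝ] ℝ, Tendsto (fun n => f (x n)) atTop (𝓝 (f x₀))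

/-- A sequence is weakly Cauchy. -/
def WeaklyCauchySeq (x : ℕ → E) : Prop :=
  ∀ f : E →L[ℝ] ℝ, ∃ L : ℝ, Tendsto (fun n => f (x n)) atTop (𝓝 L)

/-- Every bounded sequence has a weakly Cauchy subsequence. -/
def AlmostReflexive (E : Type*) [NormedAddCommGroup E] [NormedSpace ℝ E] : Prop :=
  ∀ x : ℕ → E, (∃ C : ℝ, ∀ n, ‖x n‖ ≤ C) →
    ∃ φ : ℕ → ℕ, StrictMono φ ∧ WeaklyCauchySeq (x ∘ φ)

/-- Every weakly convergent sequence converges in norm. -/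
def SchurProperty (E : Type*) [NormedAddCommGroup E] [NormedSpace ℝ E] : Prop :=
  ∀ (x : ℕ → E) (x₀ : E), WeakConvTo x x₀ → Tendsto x atTop (𝓝 x₀)

/-- Sequential reflexivity: every bounded sequence has a weakly convergent subsequence. -/
def SeqReflexive (E : Type*) [NormedAddCommGroup E] [NormedSpace ℝ E] : Prop :=
  ∀ x : ℕ → E, (∃ C : ℝ, ∀ n, ‖x n‖ ≤ C) →
    ∃ φ : ℕ → ℕ, StrictMono φ ∧ ∃ x₀ : E, WeakConvTo (x ∘ φ) x₀

/-- Every weakly Cauchy sequence converges weakly. -/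
def WeaklySeqComplete (E : Type*) [NormedAddCommGroup E] [NormedSpace ℝ E] : Prop :=
  ∀ x : ℕ → E, WeaklyCauchySeq x → ∃ x₀ : E, WeakConvTo x x₀

/-- No infinite-dimensional closed subspace is (sequentially) reflexive. -/
def VeryIrreflexive (E : Type*) [NormedAddCommGroup E] [NormedSpace ℝ E] : Prop :=
  ∀ X₀ : Subspace ℝ E, IsClosed (X₀ : Set E) → ¬FiniteDimensional ℝ X₀ →
    ¬SeqReflexive X₀

/-- A strictly singular bounded operator: on no infinite-dimensional closed subspace is it
an isomorphism onto its image. -/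
def StrictlySingular (T : E →L[ℝ] F) : Prop :=
  ∀ X₀ : Subspace ℝ E, IsClosed (X₀ : Set E) → ¬FiniteDimensional ℝ X₀ →
    ¬∃ c : ℝ, 0 < c ∧ ∀ x ∈ X₀, c * ‖x‖ ≤ ‖T x‖

/-- A weakly compact operator. -/
def WeaklyCompactOp (T : E →L[ℝ] F) : Prop :=
  ∀ x : ℕ → E, (∃ C : ℝ, ∀ n, ‖x n‖ ≤ C) →
    ∃ φ : ℕ → ℕ, StrictMono φ ∧ ∃ y : F, WeakConvTo (fun n => T (x (φ n))) y

/-- A completely continuous operator maps weakly convergent sequences to norm convergent ones. -/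
def CompletelyContinuousOp (T : E →L[ℝ] F) : Prop :=
  ∀ (x : ℕ → E) (x₀ : E), WeakConvTo x x₀ → ∃ y : F, Tendsto (fun n => T (x n)) atTop (𝓝 y)

/-- The image of the closed unit ball is relatively compact in norm. -/
def CompactOp (T : E →L[ℝ] F) : Prop :=
  IsCompact (closure (⇑T '' Metric.closedBall (0 : E) 1))

/-- The Dunford–Pettis property. -/
def DunfordPettisProp (E : Type*) [NormedAddCommGroup E] [NormedSpace ℝ E] : Prop :=
  ∀ (Z : Type*) [NormedAddCommGroup Z] [NormedSpace ℝ Z] [CompleteSpace Z],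
    ∀ T : E →L[ℝ] Z, WeaklyCompactOp T → CompletelyContinuousOp T

/-- The reciprocal Dunford–Pettis property. -/
def ReciprocalDunfordPettisProp (E : Type*) [NormedAddCommGroup E] [NormedSpace ℝ E] : Prop :=
  ∀ (Z : Type*) [NormedAddCommGroup Z] [NormedSpace ℝ Z] [CompleteSpace Z],
    ∀ T : E →L[ℝ] Z, CompletelyContinuousOp T → WeaklyCompactOp T

/-- The Dieudonné property. -/
def DieudonneProp (E : Type*) [NormedAddCommGroup E] [NormedSpace ℝ E] : Prop :=
  ∀ (Z : Type*) [NormedAddCommGroup Z] [NormedSpace ℝ Z] [CompleteSpace Z],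
    ∀ T : E →L[ℝ] Z,
      (∀ x : ℕ → E, WeaklyCauchySeq x → ∃ y : Z, WeakConvTo (fun n => T (x n)) y) →
      WeaklyCompactOp T

/-- A Grothendieck space: weak*-convergent sequences in the dual converge weakly. -/
def GrothendieckSpace (E : Type*) [NormedAddCommGroup E] [NormedSpace ℝ E] : Prop :=
  ∀ (f : ℕ → (E →L[ℝ] ℝ)) (g : E →L[ℝ] ℝ),
    (∀ x : E, Tendsto (fun n => f n x) atTop (𝓝 (g x))) →
    ∀ F : (E →L[ℝ] ℝ) →L[ℝ] ℝ, Tendsto (fun n => F (f n)) atTop (𝓝 (F g))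

/-- The Banach space ℓ¹ of absolutely summable real sequences. -/
abbrev EllOne : Type := lp (fun _ : ℕ => ℝ) 1

/-- Quasi-reflexive: the canonical image of `E` in its bidual has finite codimension. -/
def QuasiReflexive (E : Type*) [NormedAddCommGroup E] [NormedSpace ℝ E] : Prop :=
  FiniteDimensional ℝ
    ((StrongDual ℝ (StrongDual ℝ E)) ⧸
      LinearMap.range (NormedSpace.inclusionInDoubleDual ℝ E).toLinearMap)

/-- Hereditarily-ℓ¹: every infinite-dimensional closed subspace contains a closed subspace
topologically isomorphic to ℓ¹. -/
def HereditarilyEllOne (E : Type*) [NormedAddCommGroup E] [NormedSpace ℝ E] : Prop :=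
  ∀ X₀ : Subspace ℝ E, IsClosed (X₀ : Set E) → ¬FiniteDimensional ℝ X₀ →
    ∃ Z : Subspace ℝ E, Z ≤ X₀ ∧ IsClosed (Z : Set E) ∧ Nonempty (Z ≃L[ℝ] EllOne)

end Defs

/-!
A bounded sequence in `X` has a weakly Cauchy subsequence; its image under `T` is again weakly
Cauchy, and in a Schur space weakly Cauchy sequences are norm Cauchy (the differences
`y m - y n` along any `(m, n) → ∞` are weakly null). So every sequence in `T '' closedBall 0 1`
has a norm Cauchy subsequence, i.e. this set is totally bounded, and its closure is compact
because `Y` is complete.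
-/

theorem WeaklyCauchySeq.map {E F : Type*} [NormedAddCommGroup E] [NormedSpace ℝ E]
    [NormedAddCommGroup F] [NormedSpace ℝ F] {x : ℕ → E} (hx : WeaklyCauchySeq x)
    (T : E →L[ℝ] F) : WeaklyCauchySeq (T ∘ x) :=
  fun g => hx (g.comp T)

theorem SchurProperty.cauchySeq {F : Type*} [NormedAddCommGroup F] [NormedSpace ℝ F]
    (hF : SchurProperty F) {y : ℕ → F} (hy : WeaklyCauchySeq y) : CauchySeq y := by
  rw [cauchySeq_iff_tendsto_dist_atTop_0, tendsto_iff_seq_tendsto]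
  intro p hp
  rw [← prod_atTop_atTop_eq] at hp
  have hweak : WeakConvTo (fun k => y (p k).1 - y (p k).2) 0 := fun f => by
    obtain ⟨L, hL⟩ := hy f
    simpa using (hL.comp (tendsto_fst.comp hp)).sub (hL.comp (tendsto_snd.comp hp))
  simpa [Function.comp_def, dist_eq_norm] using (hF _ 0 hweak).norm

theorem totallyBounded_of_forall_exists_cauchySeq {α : Type*} [UniformSpace α] {s : Set α}
    (h : ∀ u : ℕ → α, (∀ n, u n ∈ s) → ∃ φ : ℕ → ℕ, StrictMono φ ∧ CauchySeq (u ∘ φ)) :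
    TotallyBounded s := by
  intro V hV
  by_contra! hcover
  obtain ⟨u, hu⟩ : ∃ u : ℕ → α, ∀ n, u n ∈ s ∧ ∀ y ∈ u '' Set.Iio n, (u n, y) ∉ V := by
    refine Set.seq_of_forall_finite_exists (P := fun c t => c ∈ s ∧ ∀ y ∈ t, (c, y) ∉ V)
      fun t ht => ?_
    simpa [Set.not_subset] using hcover t ht
  obtain ⟨φ, hφ, hcauchy⟩ := h u fun n => (hu n).1
  obtain ⟨N, hN⟩ := hcauchy.mem_entourage hV
  exact (hu (φ (N + 1))).2 _ ⟨φ N, hφ N.lt_succ_self, rfl⟩ (hN (N + 1) N N.le_succ le_rfl)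

variable {X : Type*} [NormedAddCommGroup X] [NormedSpace ℝ X] [CompleteSpace X]
variable {Y : Type*} [NormedAddCommGroup Y] [NormedSpace ℝ Y] [CompleteSpace Y]

/-- If `X` is almost reflexive and `Y` has the Schur property, then every bounded linear
operator `T : X → Y` is compact. -/
theorem stmt0 (hX : AlmostReflexive X) (hY : SchurProperty Y) (T : X →L[ℝ] Y) :
    CompactOp T := by
  refine isCompact_iff_totallyBounded_isComplete.2
    ⟨(totallyBounded_of_forall_exists_cauchySeq ?_).closure, isClosed_closure.isComplete⟩
  intro u hu
  choose x hx hTx using hu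
  obtain rfl : T ∘ x = u := funext hTx
  obtain ⟨φ, hφ, hxφ⟩ := hX x ⟨1, fun n => by simpa using hx n⟩
  exact ⟨φ, hφ, hY.cauchySeq (hxφ.map T)⟩
end

section
/- Let X and Y be Banach spaces over ℝ. If X is hereditarily-ℓ¹ and Y is almost reflexive, then every bounded linear operator T : X → Y is strictly singular. -/
/-!
If `T` were bounded below on an infinite-dimensional closed subspace, it would embed a copy of
`ℓ¹` isomorphically into `Y`. Almost reflexivity passes to every space that embeds isomorphically
into `Y`, because by Hahn–Banach every functional on the copy extends to `Y`; so `ℓ¹` would be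
almost reflexive.
But no subsequence `(e_{φ n})` of the unit vector basis of `ℓ¹` is weakly Cauchy: the functional
given by the indicator of `{φ n | n even}` in `ℓ^∞` takes the values `1, 0, 1, 0, …` along it.
-/

open Filter Topology

section Antilipschitz

variable {E F : Type*} [NormedAddCommGroup E] [NormedSpace ℝ E]
  [NormedAddCommGroup F] [NormedSpace ℝ F]

/-- Hahn–Banach, applied to `g ∘ S⁻¹` on the range of `S`. -/
theorem ContinuousLinearMap.exists_comp_eq_of_antilipschitz {K : NNReal} {S : E →L[ℝ] F}
    (hS : AntilipschitzWith K S) (g : StrongDual ℝ E) : ∃ H : StrongDual ℝ F, H ∘L S = g := by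
  let e : E ≃ₗ[ℝ] LinearMap.range (S : E →ₗ[ℝ] F) :=
    LinearEquiv.ofInjective (S : E →ₗ[ℝ] F) hS.injective
  have he : ∀ y, ‖e.symm y‖ ≤ K * ‖y‖ := fun y => by
    have hy : S (e.symm y) = y := congrArg Subtype.val (e.apply_symm_apply y)
    simpa only [hy, Submodule.coe_norm] using S.bound_of_antilipschitz hS (e.symm y)
  let h : StrongDual ℝ (LinearMap.range (S : E →ₗ[ℝ] F)) :=
    (g.toLinearMap ∘ₗ e.symm.toLinearMap).mkContinuous (‖g‖ * K) fun y => by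
      calc ‖g (e.symm y)‖ ≤ ‖g‖ * ‖e.symm y‖ := g.le_opNorm _
        _ ≤ ‖g‖ * (K * ‖y‖) := by gcongr; exact he y
        _ = ‖g‖ * K * ‖y‖ := (mul_assoc _ _ _).symm
  obtain ⟨H, hH, -⟩ := exists_extension_norm_eq _ h
  refine ⟨H, ContinuousLinearMap.ext fun x => ?_⟩
  have : H (S x) = h (e x) := hH (e x)
  simpa [h] using this

theorem WeaklyCauchySeq.of_comp_antilipschitz {K : NNReal} {S : E →L[ℝ] F}
    (hS : AntilipschitzWith K S) {x : ℕ → E} (hx : WeaklyCauchySeq fun n => S (x n)) :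
    WeaklyCauchySeq x := by
  intro g
  obtain ⟨H, rfl⟩ := S.exists_comp_eq_of_antilipschitz hS g
  exact hx H

theorem AlmostReflexive.of_antilipschitz {K : NNReal} {S : E →L[ℝ] F}
    (hS : AntilipschitzWith K S) (hF : AlmostReflexive F) : AlmostReflexive E := by
  rintro x ⟨C, hC⟩
  obtain ⟨φ, hφ, hSx⟩ := hF (fun n => S (x n)) ⟨‖S‖ * C, fun n =>
    (S.le_opNorm _).trans (mul_le_mul_of_nonneg_left (hC n) (norm_nonneg S))⟩
  exact ⟨φ, hφ, hSx.of_comp_antilipschitz hS⟩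

end Antilipschitz

theorem not_tendsto_ite_even {α : Type*} [TopologicalSpace α] [T2Space α] {a b : α}
    (hab : a ≠ b) (L : α) : ¬Tendsto (fun n : ℕ => if Even n then a else b) atTop (𝓝 L) := by
  intro h
  have heven : Tendsto (fun m : ℕ => 2 * m) atTop atTop :=
    (strictMono_mul_left_of_pos two_pos).tendsto_atTop
  have hodd : Tendsto (fun m : ℕ => 2 * m + 1) atTop atTop :=
    (tendsto_add_atTop_nat 1).comp heven
  have ha : Tendsto (fun _ : ℕ => a) atTop (𝓝 L) := by
    simpa [Function.comp_def] using h.comp heven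
  have hb : Tendsto (fun _ : ℕ => b) atTop (𝓝 L) := by
    simpa [Function.comp_def, parity_simps] using h.comp hodd
  exact hab ((tendsto_nhds_unique tendsto_const_nhds ha).trans
    (tendsto_nhds_unique hb tendsto_const_nhds))

namespace EllOne

open scoped ENNReal

noncomputable def pairing (a : lp (fun _ : ℕ => ℝ) ∞) : StrongDual ℝ EllOne :=
  lp.dualPairing ∞ 1 (fun _ => ContinuousLinearMap.mul ℝ ℝ)
    (K := 1) (fun _ => (ContinuousLinearMap.opNorm_mul_le ℝ ℝ).trans_eq NNReal.coe_one.symm) a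

theorem pairing_single (a : lp (fun _ : ℕ => ℝ) ∞) (k : ℕ) :
    pairing a (lp.single 1 k 1) = a k := by
  rw [pairing, lp.dualPairing_apply]
  simp [lp.single_apply, Pi.single_apply]

theorem not_weaklyCauchySeq_single {φ : ℕ → ℕ} (hφ : φ.Injective) :
    ¬WeaklyCauchySeq fun n => (lp.single 1 (φ n) 1 : EllOne) := by
  intro h
  let a : lp (fun _ : ℕ => ℝ) ∞ := ⟨(φ '' {n | Even n}).indicator 1, memℓp_infty ⟨1, by
    rintro _ ⟨i, rfl⟩
    exact (norm_indicator_le_norm_self _ i).trans norm_one.le⟩⟩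
  have ha : ∀ n, pairing a (lp.single 1 (φ n) 1) = if Even n then 1 else 0 := fun n => by
    simp [pairing_single, a, Set.indicator, hφ.mem_set_image]
  obtain ⟨L, hL⟩ := h (pairing a)
  simp only [ha] at hL
  exact not_tendsto_ite_even one_ne_zero L hL

theorem not_almostReflexive : ¬AlmostReflexive EllOne := by
  intro h
  obtain ⟨φ, hφ, hcauchy⟩ := h (fun n => (lp.single 1 n 1 : EllOne))
    ⟨1, fun n => (lp.norm_single (E := fun _ : ℕ => ℝ) one_pos n 1).trans_le norm_one.le⟩
  exact not_weaklyCauchySeq_single hφ.injective hcauchy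

end EllOne

variable {X : Type*} [NormedAddCommGroup X] [NormedSpace ℝ X] [CompleteSpace X]
variable {Y : Type*} [NormedAddCommGroup Y] [NormedSpace ℝ Y] [CompleteSpace Y]

/-- If `X` is hereditarily-ℓ¹ and `Y` is almost reflexive, then every bounded linear operator
`T : X → Y` is strictly singular. -/
theorem stmt6 (hX : HereditarilyEllOne X) (hY : AlmostReflexive Y) (T : X →L[ℝ] Y) :
    StrictlySingular T := by
  rintro X₀ hX₀ hinf ⟨c, hc, hbound⟩
  obtain ⟨Z, hZX₀, -, ⟨e⟩⟩ := hX X₀ hX₀ hinf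
  have hTZ : AntilipschitzWith (Real.toNNReal c⁻¹) (T ∘L Z.subtypeL) :=
    ContinuousLinearMap.antilipschitz_of_bound _ fun z => by
      rw [Real.coe_toNNReal _ (inv_nonneg.mpr hc.le), ← div_eq_inv_mul, le_div_iff₀ hc, mul_comm]
      exact hbound z (hZX₀ z.2)
  exact EllOne.not_almostReflexive <| hY.of_antilipschitz
    (S := T ∘L Z.subtypeL ∘L (e.symm : EllOne →L[ℝ] Z)) (hTZ.comp e.symm.antilipschitz)
end

section
/- Let X and Y be Banach spaces over ℝ. If X has the Schur property and Y is almost reflexive, then every bounded linear operator T : X → Y is strictly singular. -/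
open Filter Topology

variable {X : Type*} [NormedAddCommGroup X] [NormedSpace ℝ X] [CompleteSpace X]
variable {Y : Type*} [NormedAddCommGroup Y] [NormedSpace ℝ Y] [CompleteSpace Y]

/-!
If `T` were bounded below on an infinite-dimensional subspace `X₀`, take a bounded 1-separated
sequence in `X₀` (Riesz). Its image has a weakly Cauchy subsequence in `Y`; by Hahn–Banach every
functional on `X` factors through `T` on `X₀`, so the subsequence itself is weakly Cauchy, hence
norm Cauchy by the Schur property, contradicting the separation.
-/

section WeakSequences

variable {E : Type*} [NormedAddCommGroup E] [NormedSpace ℝ E]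
variable {F : Type*} [NormedAddCommGroup F] [NormedSpace ℝ F]

theorem WeaklyCauchySeq.comp_continuousLinearMap {x : ℕ → E} (hx : WeaklyCauchySeq x)
    (S : E →L[ℝ] F) : WeaklyCauchySeq (S ∘ x) :=
  fun f => hx (f.comp S)

theorem WeaklyCauchySeq.weakConvTo_sub_zero {x : ℕ → E} (hx : WeaklyCauchySeq x)
    {p : ℕ → ℕ × ℕ} (hp : Tendsto p atTop atTop) :
    WeakConvTo (fun k => x (p k).1 - x (p k).2) 0 := by
  intro f
  obtain ⟨L, hL⟩ := hx f
  rw [← prod_atTop_atTop_eq] at hp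
  simpa only [map_sub, map_zero, sub_self, Function.comp_apply] using
    (hL.comp (tendsto_fst.comp hp)).sub (hL.comp (tendsto_snd.comp hp))

/-- Differences along any pair of indices tending to infinity are weakly null. -/
theorem SchurProperty.cauchySeq_of_weaklyCauchySeq (hE : SchurProperty E) {x : ℕ → E}
    (hx : WeaklyCauchySeq x) : CauchySeq x := by
  rw [cauchySeq_iff_tendsto_dist_atTop_0, tendsto_iff_seq_tendsto]
  intro p hp
  simpa only [dist_eq_norm, norm_zero, Function.comp_def] using
    (hE _ 0 (hx.weakConvTo_sub_zero hp)).norm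

/-- Extend `f ∘ S⁻¹` from the range of `S` by Hahn–Banach. -/
theorem ContinuousLinearMap.exists_dual_comp_eq_of_mul_norm_le (S : E →L[ℝ] F) {c : ℝ}
    (hc : 0 < c) (hS : ∀ x, c * ‖x‖ ≤ ‖S x‖) (f : E →L[ℝ] ℝ) :
    ∃ g : F →L[ℝ] ℝ, g.comp S = f := by
  have hinj : Function.Injective S := by
    refine (injective_iff_map_eq_zero S).2 fun x hx => norm_le_zero_iff.1 ?_
    have := hS x
    rw [hx, norm_zero] at this
    nlinarith [norm_nonneg x]
  let e := LinearEquiv.ofInjective (S : E →ₗ[ℝ] F) hinj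
  have hbound : ∀ w, ‖(f.toLinearMap ∘ₗ e.symm.toLinearMap) w‖ ≤ ‖f‖ / c * ‖w‖ := by
    intro w
    obtain ⟨x, rfl⟩ := e.surjective w
    calc ‖f (e.symm (e x))‖ = ‖f x‖ := by rw [e.symm_apply_apply]
      _ ≤ ‖f‖ * ‖x‖ := f.le_opNorm x
      _ ≤ ‖f‖ / c * ‖e x‖ := by
        rw [div_mul_eq_mul_div, le_div_iff₀ hc, mul_assoc]
        exact mul_le_mul_of_nonneg_left (by rw [mul_comm]; exact hS x) (norm_nonneg f)
  obtain ⟨g, hg, -⟩ := exists_extension_norm_eq _ (LinearMap.mkContinuous _ _ hbound)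
  refine ⟨g, ContinuousLinearMap.ext fun x => ?_⟩
  simpa [e, LinearEquiv.ofInjective_apply] using hg (e x)

theorem WeaklyCauchySeq.of_comp_of_mul_norm_le {x : ℕ → E} (S : E →L[ℝ] F) {c : ℝ}
    (hc : 0 < c) (hS : ∀ x, c * ‖x‖ ≤ ‖S x‖) (hSx : WeaklyCauchySeq (S ∘ x)) :
    WeaklyCauchySeq x := by
  intro f
  obtain ⟨g, rfl⟩ := S.exists_dual_comp_eq_of_mul_norm_le hc hS f
  exact hSx g

end WeakSequences

/-- If `X` has the Schur property and `Y` is almost reflexive, then every bounded linear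
operator `T : X → Y` is strictly singular. -/
theorem stmt8 (hX : SchurProperty X) (hY : AlmostReflexive Y) (T : X →L[ℝ] Y) :
    StrictlySingular T := by
  rintro X₀ - hX₀ ⟨c, hc, hT⟩
  obtain ⟨R, u, -, hu, hsep⟩ := exists_seq_norm_le_one_le_norm_sub (𝕜 := ℝ) hX₀
  set S := T.comp X₀.subtypeL
  obtain ⟨φ, hφ, hSu⟩ := hY (S ∘ u) ⟨‖S‖ * R, fun n => S.le_opNorm_of_le (hu n)⟩
  have hu_weak : WeaklyCauchySeq (u ∘ φ) :=
    .of_comp_of_mul_norm_le S hc (fun x => hT x x.2) hSu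
  have hu_cauchy : CauchySeq (X₀.subtypeL ∘ u ∘ φ) :=
    hX.cauchySeq_of_weaklyCauchySeq (hu_weak.comp_continuousLinearMap X₀.subtypeL)
  obtain ⟨N, hN⟩ := Metric.cauchySeq_iff'.1 hu_cauchy 1 one_pos
  refine (hN (N + 1) N.le_succ).not_ge ?_
  rw [dist_eq_norm]
  exact hsep (hφ.injective.ne N.succ_ne_self)
end

section
/- Let X and Y be Banach spaces over ℝ such that every bounded linear operator from X to Y is completely continuous, and suppose X has the reciprocal Dunford–Pettis property. Then every bounded linear operator T : X → Y is strictly singular. -/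
open Filter Topology

/-!
Suppose `c ‖x‖ ≤ ‖T x‖` on an infinite-dimensional closed subspace `X₀`, and pick a bounded
sequence `(vₙ)` in `X₀` with `‖vₘ - vₙ‖ ≥ 1` (Riesz). Let `W` be its closed span. Embedding the
separable space `T W` into `ℓ^∞` gives a completely continuous `S : X → ℓ^∞` that is still bounded
below on `W`. By the reciprocal Dunford–Pettis property `S` is weakly compact, so a subsequence
`S v_{φ n}` converges weakly; as `S` is an isomorphism of `W` onto a closed subspace, `v_{φ n}`
converges weakly, and complete continuity of `T` makes `T v_{φ n}` norm convergent, contradicting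
`‖T vₘ - T vₙ‖ ≥ c`.
-/

open scoped ENNReal NNReal

theorem not_cauchySeq_of_pairwise_le_dist {α : Type*} [PseudoMetricSpace α] {x : ℕ → α} {ε : ℝ}
    (hε : 0 < ε) (h : Pairwise fun m n => ε ≤ dist (x m) (x n)) : ¬CauchySeq x := fun hx =>
  let ⟨N, hN⟩ := Metric.cauchySeq_iff.1 hx ε hε
  (h N.lt_succ_self.ne).not_gt (hN N le_rfl (N + 1) N.le_succ)

section WeakConvergence

variable {E : Type*} [NormedAddCommGroup E] [NormedSpace ℝ E]
variable {F : Type*} [NormedAddCommGroup F] [NormedSpace ℝ F]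

theorem WeakConvTo.map {x : ℕ → E} {x₀ : E} (h : WeakConvTo x x₀) (A : E →L[ℝ] F) :
    WeakConvTo (fun n => A (x n)) (A x₀) :=
  fun f => h (f.comp A)

theorem CompletelyContinuousOp.clm_comp {G : Type*} [NormedAddCommGroup G] [NormedSpace ℝ G]
    {T : E →L[ℝ] F} (hT : CompletelyContinuousOp T) (A : F →L[ℝ] G) :
    CompletelyContinuousOp (A.comp T) := fun x x₀ hx =>
  let ⟨y, hy⟩ := hT x x₀ hx
  ⟨A y, (A.continuous.tendsto y).comp hy⟩

theorem Convex.mem_of_weakConvTo {s : Set E} (hconv : Convex ℝ s) (hclosed : IsClosed s)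
    {x : ℕ → E} {x₀ : E} (hx : ∀ n, x n ∈ s) (h : WeakConvTo x x₀) : x₀ ∈ s := by
  by_contra hx₀
  obtain ⟨f, u, hfs, hfx₀⟩ := geometric_hahn_banach_closed_point hconv hclosed hx₀
  exact hfx₀.not_ge (le_of_tendsto' (h f) fun n => (hfs _ (hx n)).le)

theorem AntilipschitzWith.exists_weakConvTo [CompleteSpace E] [CompleteSpace F]
    {S : E →L[ℝ] F} {K : ℝ≥0} (hS : AntilipschitzWith K S) {x : ℕ → E} {w : F}
    (hw : WeakConvTo (fun n => S (x n)) w) : ∃ x₀, WeakConvTo x x₀ := by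
  have hclosed : IsClosed (Set.range S) := hS.isClosed_range S.uniformContinuous
  obtain ⟨x₀, rfl⟩ : w ∈ Set.range S :=
    (LinearMap.range (S : E →ₗ[ℝ] F)).convex.mem_of_weakConvTo hclosed (fun n => ⟨x n, rfl⟩) hw
  refine ⟨x₀, fun f => ?_⟩
  let e := S.equivRange hS.injective hclosed
  obtain ⟨g, hg, -⟩ := exists_extension_norm_eq _ (f.comp (e.symm : S.range →L[ℝ] E))
  have hgS : ∀ y, g (S y) = f y := fun y => (hg (e y)).trans (by simp)
  simpa only [hgS] using hw g

theorem CompletelyContinuousOp.not_weakConvTo_of_pairwise {T : E →L[ℝ] F}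
    (hT : CompletelyContinuousOp T) {s : Submodule ℝ E} {c : ℝ} (hc : 0 < c)
    (hlow : ∀ x ∈ s, c * ‖x‖ ≤ ‖T x‖) {v : ℕ → E} (hv : ∀ n, v n ∈ s)
    (hsep : Pairwise fun m n => 1 ≤ ‖v m - v n‖) (x₀ : E) : ¬WeakConvTo v x₀ := fun hx₀ => by
  obtain ⟨y, hy⟩ := hT v x₀ hx₀
  refine not_cauchySeq_of_pairwise_le_dist hc (fun m n hmn => ?_) hy.cauchySeq
  calc c ≤ c * ‖v m - v n‖ := le_mul_of_one_le_right hc.le (hsep hmn)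
    _ ≤ ‖T (v m - v n)‖ := hlow _ (sub_mem (hv m) (hv n))
    _ = dist (T (v m)) (T (v n)) := by rw [map_sub, dist_eq_norm]

end WeakConvergence

section LpInfty

variable {E : Type*} [NormedAddCommGroup E] [NormedSpace ℝ E] {ι : Type*}

noncomputable def lpInftyOfDual (f : ι → StrongDual ℝ E) (hf : ∀ i, ‖f i‖ ≤ 1) :
    E →L[ℝ] lp (fun _ : ι => ℝ) ∞ :=
  LinearMap.mkContinuous
    { toFun := fun y => ⟨fun i => f i y,
        memℓp_infty ⟨‖y‖, by rintro _ ⟨i, rfl⟩; simpa using (f i).le_of_opNorm_le (hf i) y⟩⟩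
      map_add' := fun y z => lp.ext (funext fun i => map_add (f i) y z)
      map_smul' := fun r y => lp.ext (funext fun i => map_smul (f i) r y) }
    1 fun y => by
      rw [one_mul]
      exact lp.norm_le_of_forall_le (norm_nonneg y) fun i => by
        simpa using (f i).le_of_opNorm_le (hf i) y

theorem norm_apply_le_norm_lpInftyOfDual (f : ι → StrongDual ℝ E) (hf : ∀ i, ‖f i‖ ≤ 1)
    (y : E) (i : ι) : ‖f i y‖ ≤ ‖lpInftyOfDual f hf y‖ :=
  lp.norm_apply_le_norm ENNReal.top_ne_zero (lpInftyOfDual f hf y) i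

theorem TopologicalSpace.IsSeparable.exists_clm_lpInfty_norm_le {s : Set E} (hs : IsSeparable s) :
    ∃ J : E →L[ℝ] lp (fun _ : ℕ => ℝ) ∞, ∀ y ∈ s, ‖y‖ ≤ ‖J y‖ := by
  obtain ⟨c, hc, hsc⟩ := hs
  obtain ⟨d, hd⟩ := (hc.insert 0).exists_eq_range (Set.insert_nonempty 0 c)
  choose f hf hfd using fun n => exists_dual_vector'' ℝ (d n)
  let J := lpInftyOfDual f hf
  have hrange : Set.range d ⊆ {y | ‖y‖ ≤ ‖J y‖} := by
    rintro _ ⟨n, rfl⟩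
    calc ‖d n‖ = f n (d n) := (hfd n).symm
      _ ≤ ‖f n (d n)‖ := Real.le_norm_self _
      _ ≤ ‖J (d n)‖ := norm_apply_le_norm_lpInftyOfDual f hf _ n
  have hclosed : IsClosed {y | ‖y‖ ≤ ‖J y‖} := isClosed_le continuous_norm (by fun_prop)
  refine ⟨J, fun y hy => closure_minimal hrange hclosed ?_⟩
  exact hd ▸ closure_mono (Set.subset_insert 0 c) (hsc hy)

end LpInfty

variable {X : Type*} [NormedAddCommGroup X] [NormedSpace ℝ X] [CompleteSpace X]
variable {Y : Type*} [NormedAddCommGroup Y] [NormedSpace ℝ Y] [CompleteSpace Y]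

/-- If every bounded linear operator from `X` to `Y` is completely continuous and `X` has the
reciprocal Dunford–Pettis property, then every bounded linear operator `T : X → Y` is strictly
singular. -/
theorem stmt12 (h : ∀ T : X →L[ℝ] Y, CompletelyContinuousOp T)
    (hX : ReciprocalDunfordPettisProp X) (T : X →L[ℝ] Y) : StrictlySingular T := by
  rintro X₀ hX₀ hdim ⟨c, hc, hlow⟩
  obtain ⟨R, v, -, hvR, hsep⟩ := exists_seq_norm_le_one_le_norm_sub (𝕜 := ℝ) hdim
  set W := (Submodule.span ℝ (Set.range fun n => (v n : X))).topologicalClosure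
  have hWX₀ : W ≤ X₀ := Submodule.topologicalClosure_minimal _
    (Submodule.span_le.2 (Set.range_subset_iff.2 fun n => (v n).2)) hX₀
  have hW : TopologicalSpace.IsSeparable (T '' W) := by
    rw [Submodule.topologicalClosure_coe]
    exact ((Set.countable_range _).isSeparable.span.closure).image T.continuous
  -- `hX` only speaks about targets in a single universe, so `T` is replaced by an operator into
  -- a lift of `ℓ^∞` that does not shrink norms on `T '' W`.
  obtain ⟨J, hJ⟩ := hW.exists_clm_lpInfty_norm_le
  let L := (LinearIsometryEquiv.ulift ℝ (lp (fun _ : ℕ => ℝ) ∞)).symm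
  let S := L.toContinuousLinearEquiv.toContinuousLinearMap ∘L J ∘L T
  obtain ⟨φ, hφ, w, hw⟩ := hX _ S (((h T).clm_comp J).clm_comp _) (fun n => v n) ⟨R, hvR⟩
  have hS : AntilipschitzWith c.toNNReal⁻¹ (S ∘L W.subtypeL) := by
    refine ContinuousLinearMap.antilipschitz_of_bound _ fun ⟨x, hx⟩ => ?_
    rw [NNReal.coe_inv, Real.coe_toNNReal _ hc.le, le_inv_mul_iff₀ hc]
    calc c * ‖x‖ ≤ ‖T x‖ := hlow x (hWX₀ hx)
      _ ≤ ‖J (T x)‖ := hJ _ ⟨x, hx, rfl⟩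
      _ = ‖S x‖ := (L.norm_map _).symm
  have hvW (n : ℕ) : (v n : X) ∈ W :=
    Submodule.le_topologicalClosure _ (Submodule.subset_span ⟨n, rfl⟩)
  obtain ⟨x₀, hx₀⟩ := hS.exists_weakConvTo (x := fun n => ⟨v (φ n), hvW (φ n)⟩) hw
  exact (h T).not_weakConvTo_of_pairwise hc hlow (fun n => (v (φ n)).2)
    (hsep.comp_of_injective hφ.injective) _ (hx₀.map W.subtypeL)
end

section
/- Every Banach space over ℝ with the Schur property is hereditarily-ℓ¹: if X has the Schur property, then every infinite-dimensional closed subspace of X contains a closed subspace topologically isomorphic to ℓ¹. -/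
open Filter Topology

/-!
Riesz's lemma gives a bounded, `1`-separated sequence `(xₙ)` in the subspace. No subsequence is
weakly Cauchy: the differences `x_{2k+1} - x_{2k}` would be weakly null, hence norm null by the
Schur property. So along every infinite set of indices some functional of norm `≤ 1` oscillates
across a rational interval `(r, s)`. Rosenthal's combinatorial argument fixes one interval and
extracts a subsequence that is `(r, s)`-independent: for every finite sign pattern some functional
of norm `≤ 1` lies above `s` on the terms of one sign and below `r` on the others. Comparing two
opposite patterns gives `(s - r) / 2 * ∑ |aᵢ| ≤ ‖∑ aᵢ xᵢ‖`, so `a ↦ ∑ aᵢ xᵢ` maps `ℓ¹`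
isomorphically onto a closed subspace.
-/

open Set

theorem exists_seq_of_forall_exists {α : Type*} {P : α → Prop} {R : ℕ → α → α → Prop} {a : α}
    (ha : P a) (h : ∀ k a, P a → ∃ b, P b ∧ R k a b) :
    ∃ f : ℕ → α, f 0 = a ∧ ∀ k, P (f k) ∧ R k (f k) (f (k + 1)) := by
  choose g hgP hgR using h
  let f : ℕ → {a // P a} := fun k => Nat.rec ⟨a, ha⟩ (fun k b => ⟨g k b b.2, hgP k b b.2⟩) k
  exact ⟨fun k => (f k).1, rfl, fun k => ⟨(f k).2, hgR k _ _⟩⟩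

theorem exists_strictMono_diagonal {M : Set ℕ} (hM : M.Infinite) {Q : ℕ → ℕ → Set ℕ → Prop}
    (h : ∀ k, ∀ A ⊆ M, A.Infinite → ∃ n ∈ A, ∃ A' ⊆ A, A'.Infinite ∧ Q k n A') :
    ∃ (n : ℕ → ℕ) (A : ℕ → Set ℕ), StrictMono n ∧ range n ⊆ M ∧
      ∀ k, Q k (n k) (A k) ∧ (range n \ A k).Finite := by
  obtain ⟨f, -, hf⟩ := exists_seq_of_forall_exists (a := (0, M))
    (P := fun p : ℕ × Set ℕ => p.2 ⊆ M ∧ p.2.Infinite)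
    (R := fun k p q => q.1 ∈ p.2 ∧ p.1 < q.1 ∧ q.2 ⊆ p.2 ∧ Q k q.1 q.2) ⟨subset_rfl, hM⟩
    (fun k p ⟨hpM, hp⟩ => by
      obtain ⟨n, ⟨hnA, hnm⟩, A', hA', hA'inf, hQ⟩ :=
        h k (p.2 \ Iic p.1) (sdiff_subset.trans hpM) (hp.sdiff (finite_Iic p.1))
      exact ⟨(n, A'), ⟨hA'.trans (sdiff_subset.trans hpM), hA'inf⟩, hnA, not_le.1 hnm,
        hA'.trans sdiff_subset, hQ⟩)
  have hanti : Antitone fun k => (f k).2 := antitone_nat_of_succ_le fun k => (hf k).2.2.2.1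
  refine ⟨fun k => (f (k + 1)).1, fun k => (f (k + 1)).2,
    strictMono_nat_of_lt_succ fun k => (hf (k + 1)).2.2.1, ?_, fun k => ⟨(hf k).2.2.2.2, ?_⟩⟩
  · rintro _ ⟨k, rfl⟩
    exact (hf k).1.1 (hf k).2.1
  · refine ((finite_Iic k).image fun k => (f (k + 1)).1).subset ?_
    rintro _ ⟨⟨j, rfl⟩, hj⟩
    exact ⟨j, mem_Iic.2 (not_lt.1 fun hkj => hj (hanti hkj (hf j).2.1)), rfl⟩

section Oscillation

variable {D : Type*} (v : ℕ → D → ℝ) (r s : ℝ)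

def side (b : Bool) (n : ℕ) : Set D :=
  if b then {f | s < v n f} else {f | v n f < r}

def Oscillates (M : Set ℕ) (f : D) : Prop :=
  ∀ b, {n ∈ M | f ∈ side v r s b n}.Infinite

def HereditarilyOscillating (M : Set ℕ) (C : Set D) : Prop :=
  ∀ M' ⊆ M, M'.Infinite → ∃ f ∈ C, Oscillates v r s M' f

variable {v r s} {M M' : Set ℕ} {f : D} {C : Set D}

theorem Oscillates.of_finite_diff (hf : Oscillates v r s M f) (hfin : (M \ M').Finite) :
    Oscillates v r s M' f := fun b =>
  ((hf b).sdiff hfin).mono fun _ hn => ⟨by_contra fun h => hn.2 ⟨hn.1.1, h⟩, hn.1.2⟩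

theorem Oscillates.exists_mem (hf : Oscillates v r s M f) (b : Bool) :
    ∃ n ∈ M, f ∈ side v r s b n :=
  (hf b).nonempty

theorem HereditarilyOscillating.subset (h : HereditarilyOscillating v r s M C) (hM : M' ⊆ M) :
    HereditarilyOscillating v r s M' C :=
  fun M'' hM'' => h M'' (hM''.trans hM)

theorem not_hereditarilyOscillating_iff : ¬HereditarilyOscillating v r s M C ↔
    ∃ M' ⊆ M, M'.Infinite ∧ ∀ f ∈ C, ¬Oscillates v r s M' f := by
  simp [HereditarilyOscillating]

theorem exists_infinite_subset_forall_hereditarilyOscillating_or {𝒮 : Set (Set D)}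
    (h𝒮 : 𝒮.Finite) (hM : M.Infinite) :
    ∃ M' ⊆ M, M'.Infinite ∧ ((∀ C ∈ 𝒮, HereditarilyOscillating v r s M' C) ∨
      ∃ C ∈ 𝒮, ∀ f ∈ C, ¬Oscillates v r s M' f) := by
  induction 𝒮, h𝒮 using Set.Finite.induction_on generalizing M with
  | empty => exact ⟨M, subset_rfl, hM, .inl fun _ h => h.elim⟩
  | @insert C 𝒮 _ _ ih =>
    by_cases hC : HereditarilyOscillating v r s M C
    · obtain ⟨M', hM', hM'inf, hall | ⟨C', hC', hbad⟩⟩ := ih hM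
      · refine ⟨M', hM', hM'inf, .inl ?_⟩
        rintro _ (rfl | hC')
        exacts [hC.subset hM', hall _ hC']
      · exact ⟨M', hM', hM'inf, .inr ⟨C', mem_insert_of_mem _ hC', hbad⟩⟩
    · obtain ⟨M', hM', hM'inf, hbad⟩ := not_hereditarilyOscillating_iff.1 hC
      exact ⟨M', hM', hM'inf, .inr ⟨C, mem_insert _ _, hbad⟩⟩

theorem exists_rat_hereditarilyOscillating
    (h : ∀ M : Set ℕ, M.Infinite → ∃ f ∈ C, ∃ r s : ℚ, (r : ℝ) < s ∧ Oscillates v r s M f) :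
    ∃ r s : ℚ, (r : ℝ) < s ∧ ∃ M : Set ℕ, M.Infinite ∧ HereditarilyOscillating v r s M C := by
  by_contra! hcon
  -- Shrink once for each rational pair; the diagonal set then refutes `h`.
  obtain ⟨e, he⟩ := exists_surjective_nat (ℚ × ℚ)
  obtain ⟨n, A, hn, -, hA⟩ := exists_strictMono_diagonal infinite_univ
    (Q := fun k _ A => ((e k).1 : ℝ) < (e k).2 → ∀ f ∈ C, ¬Oscillates v (e k).1 (e k).2 A f)
    fun k A _ hA => by
      obtain ⟨n, hn⟩ := hA.nonempty
      by_cases hrs : ((e k).1 : ℝ) < (e k).2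
      · obtain ⟨A', hA', hA'inf, hbad⟩ := not_hereditarilyOscillating_iff.1 (hcon _ _ hrs A hA)
        exact ⟨n, hn, A', hA', hA'inf, fun _ => hbad⟩
      · exact ⟨n, hn, A, subset_rfl, hA, fun h => absurd h hrs⟩
  obtain ⟨f, hfC, r, s, hrs, hf⟩ := h (range n) (infinite_range_of_injective hn.injective)
  obtain ⟨k, hk⟩ := he (r, s)
  have hbad := (hA k).1
  rw [hk] at hbad
  exact hbad hrs f hfC (hf.of_finite_diff (hA k).2)

theorem HereditarilyOscillating.exists_inter_side {𝒞 : Set (Set D)} (h𝒞 : 𝒞.Finite)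
    (hM : M.Infinite) (hP : ∀ C ∈ 𝒞, HereditarilyOscillating v r s M C) (N : ℕ) :
    ∃ n ∈ M, N ≤ n ∧ ∃ M' ⊆ M, M'.Infinite ∧
      ∀ C ∈ 𝒞, ∀ b, HereditarilyOscillating v r s M' (C ∩ side v r s b n) := by
  by_contra! hcon
  have hbad : ∀ _ : ℕ, ∀ A ⊆ M, A.Infinite → ∃ n ∈ A, ∃ A' ⊆ A, A'.Infinite ∧
      ∃ p : 𝒞 × Bool, ∀ f ∈ p.1.1 ∩ side v r s p.2 n, ¬Oscillates v r s A' f := by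
    intro _ A hAM hA
    obtain ⟨n, hnA, hNn⟩ := hA.exists_gt N
    obtain ⟨A', hA', hA'inf, hall | ⟨_, ⟨C, hC, b, -, rfl⟩, hbad⟩⟩ :=
      exists_infinite_subset_forall_hereditarilyOscillating_or (v := v) (r := r) (s := s)
        (h𝒞.image2 (fun C b => C ∩ side v r s b n) finite_univ) hA
    · obtain ⟨C, hC, b, hnot⟩ := hcon n (hAM hnA) hNn.le A' (hA'.trans hAM) hA'inf
      exact absurd (hall _ (mem_image2_of_mem hC (mem_univ b))) hnot
    · exact ⟨n, hnA, A', hA', hA'inf, (⟨C, hC⟩, b), hbad⟩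
  -- Each `n k` kills the oscillation on `A k` of one of finitely many kinds of cells; a
  -- functional oscillating on the diagonal over one kind lies in such a cell, contradiction.
  obtain ⟨n, A, hn, hnM, hA⟩ := exists_strictMono_diagonal hM hbad
  choose p hp using fun k => (hA k).1
  have : Finite 𝒞 := h𝒞.to_subtype
  obtain ⟨p₀, hp₀⟩ := Finite.exists_infinite_fiber p
  have hE : (n '' {k | p k = p₀}).Infinite :=
    (infinite_coe_iff.1 hp₀).image hn.injective.injOn
  obtain ⟨f, hfC, hf⟩ := hP p₀.1 p₀.1.2 _ ((image_subset_range _ _).trans hnM) hE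
  obtain ⟨_, ⟨k, hk, rfl⟩, hfk⟩ := hf.exists_mem p₀.2
  refine hp k f ?_ <|
    hf.of_finite_diff ((hA k).2.subset (sdiff_subset_sdiff_left (image_subset_range _ _)))
  rw [show p k = p₀ from hk]
  exact ⟨hfC, hfk⟩

theorem HereditarilyOscillating.exists_strictMono_forall_exists_mem_side (hM : M.Infinite)
    (hC : HereditarilyOscillating v r s M C) :
    ∃ n : ℕ → ℕ, StrictMono n ∧
      ∀ (k : ℕ) (σ : ℕ → Bool), ∃ f ∈ C, ∀ i < k, f ∈ side v r s (σ i) (n i) := by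
  -- State: the last chosen index, an infinite set, and the finite family of cells cut out so far.
  obtain ⟨c, hc0, hc⟩ := exists_seq_of_forall_exists (a := (0, M, {C}))
    (P := fun c : ℕ × Set ℕ × Set (Set D) =>
      c.2.1.Infinite ∧ c.2.2.Finite ∧ ∀ C ∈ c.2.2, HereditarilyOscillating v r s c.2.1 C)
    (R := fun _ c c' => c.1 < c'.1 ∧ c'.2.2 = image2 (fun C b => C ∩ side v r s b c'.1) c.2.2 univ)
    ⟨hM, finite_singleton C, by simpa using hC⟩
    (fun _ c ⟨hA, h𝒞, hP⟩ => by
      obtain ⟨n, -, hn, A', -, hA', hP'⟩ :=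
        HereditarilyOscillating.exists_inter_side h𝒞 hA hP (c.1 + 1)
      refine ⟨(n, A', image2 (fun C b => C ∩ side v r s b n) c.2.2 univ),
        ⟨hA', h𝒞.image2 _ finite_univ, ?_⟩, hn, rfl⟩
      rintro _ ⟨C, hC, b, -, rfl⟩
      exact hP' C hC b)
  refine ⟨fun i => (c (i + 1)).1, strictMono_nat_of_lt_succ fun i => (hc (i + 1)).2.1,
    fun k σ => ?_⟩
  have hcell : ∃ C' ∈ (c k).2.2, C' ⊆ C ∩ {f | ∀ i < k, f ∈ side v r s (σ i) (c (i + 1)).1} := by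
    induction k with
    | zero => exact ⟨C, by simp [hc0], fun f hf => ⟨hf, by simp⟩⟩
    | succ k ih =>
      obtain ⟨C', hC', hsub⟩ := ih
      refine ⟨C' ∩ side v r s (σ k) (c (k + 1)).1,
        (hc k).2.2 ▸ mem_image2_of_mem hC' (mem_univ _),
        fun f hf => ⟨(hsub hf.1).1, fun i hi => ?_⟩⟩
      rcases Nat.lt_succ_iff_lt_or_eq.1 hi with hi | rfl
      exacts [(hsub hf.1).2 i hi, hf.2]
  obtain ⟨C', hC', hsub⟩ := hcell
  obtain ⟨f, hf, -⟩ := (hc k).1.2.2 C' hC' _ subset_rfl (hc k).1.1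
  exact ⟨f, (hsub hf).1, (hsub hf).2⟩

end Oscillation

section Banach

variable {X : Type*} [NormedAddCommGroup X] [NormedSpace ℝ X]

theorem exists_rat_frequently_lt_and_frequently_gt {t : ℕ → ℝ} {C : ℝ} (ht : ∀ k, |t k| ≤ C)
    (h : ¬∃ L, Tendsto t atTop (𝓝 L)) :
    ∃ r s : ℚ, (r : ℝ) < s ∧ (∃ᶠ k in atTop, t k < r) ∧ ∃ᶠ k in atTop, (s : ℝ) < t k := by
  have hle : IsBoundedUnder (· ≤ ·) atTop t := isBoundedUnder_of ⟨C, fun k => (abs_le.1 (ht k)).2⟩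
  have hge : IsBoundedUnder (· ≥ ·) atTop t := isBoundedUnder_of ⟨-C, fun k => (abs_le.1 (ht k)).1⟩
  have hlt : liminf t atTop < limsup t atTop := (liminf_le_limsup hle hge).lt_of_ne
    fun heq => h ⟨_, tendsto_of_liminf_eq_limsup heq rfl hle hge⟩
  obtain ⟨r, hr, hrs⟩ := exists_rat_btwn hlt
  obtain ⟨s, hrs, hs⟩ := exists_rat_btwn hrs
  exact ⟨r, s, hrs, frequently_lt_of_liminf_lt hle.isCoboundedUnder_ge hr,
    frequently_lt_of_lt_limsup hge.isCoboundedUnder_le hs⟩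

theorem weaklyCauchySeq_of_forall_mem_closedBall {x : ℕ → X}
    (h : ∀ f ∈ Metric.closedBall (0 : X →L[ℝ] ℝ) 1, ∃ L, Tendsto (fun n => f (x n)) atTop (𝓝 L)) :
    WeaklyCauchySeq x := by
  intro f
  have hc : 0 < ‖f‖ + 1 := by positivity
  obtain ⟨L, hL⟩ := h ((‖f‖ + 1)⁻¹ • f) <| by
    rw [mem_closedBall_zero_iff, norm_smul, norm_inv, Real.norm_of_nonneg hc.le, inv_mul_le_iff₀ hc]
    linarith
  refine ⟨(‖f‖ + 1) * L, (hL.const_mul _).congr fun n => ?_⟩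
  simp [hc.ne']

theorem SchurProperty.not_weaklyCauchySeq (hX : SchurProperty X) {x : ℕ → X} {ε : ℝ} (hε : 0 < ε)
    (hsep : Pairwise fun m n => ε ≤ ‖x m - x n‖) : ¬WeaklyCauchySeq x := by
  intro hx
  choose L hL using hx
  have hodd : Tendsto (fun k => 2 * k + 1) atTop atTop :=
    tendsto_atTop_mono (fun k => show k ≤ 2 * k + 1 by omega) tendsto_id
  have heven : Tendsto (fun k => 2 * k) atTop atTop :=
    tendsto_atTop_mono (fun k => show k ≤ 2 * k by omega) tendsto_id
  have hz : Tendsto (fun k => x (2 * k + 1) - x (2 * k)) atTop (𝓝 0) :=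
    hX _ 0 fun f => by simpa using ((hL f).comp hodd).sub ((hL f).comp heven)
  obtain ⟨k, hk⟩ := (hz.eventually (Metric.ball_mem_nhds 0 hε)).exists
  exact (mem_ball_zero_iff.1 hk).not_ge (hsep (by omega))

theorem SchurProperty.exists_oscillates (hX : SchurProperty X) {x : ℕ → X} {R ε : ℝ}
    (hx : ∀ n, ‖x n‖ ≤ R) (hε : 0 < ε) (hsep : Pairwise fun m n => ε ≤ ‖x m - x n‖)
    {M : Set ℕ} (hM : M.Infinite) :
    ∃ f ∈ Metric.closedBall (0 : X →L[ℝ] ℝ) 1, ∃ r s : ℚ, (r : ℝ) < s ∧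
      Oscillates (fun n f => f (x n)) r s M f := by
  set e := Nat.nth (· ∈ M)
  have he : StrictMono e := Nat.nth_strictMono hM
  have heM : ∀ k, e k ∈ M := Nat.nth_mem_of_infinite hM
  obtain ⟨f, hf, hnot⟩ : ∃ f ∈ Metric.closedBall (0 : X →L[ℝ] ℝ) 1,
      ¬∃ L, Tendsto (fun k => f (x (e k))) atTop (𝓝 L) := by
    by_contra! h
    exact hX.not_weaklyCauchySeq hε (fun m n hmn => hsep (he.injective.ne hmn))
      (weaklyCauchySeq_of_forall_mem_closedBall h)
  have hbdd : ∀ k, |f (x (e k))| ≤ R := fun k =>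
    (f.le_opNorm _).trans <|
      (mul_le_of_le_one_left (norm_nonneg _) (mem_closedBall_zero_iff.1 hf)).trans (hx _)
  obtain ⟨r, s, hrs, hr, hs⟩ := exists_rat_frequently_lt_and_frequently_gt hbdd hnot
  refine ⟨f, hf, r, s, hrs, fun b =>
    Nat.frequently_atTop_iff_infinite.1 (he.tendsto_atTop.frequently ?_)⟩
  cases b
  · exact hr.mono fun k hk => ⟨heM k, hk⟩
  · exact hs.mono fun k hk => ⟨heM k, hk⟩

theorem mul_sum_abs_le_norm_sum_smul {x : ℕ → X} {r s : ℝ} {k : ℕ}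
    (h : ∀ σ : ℕ → Bool, ∃ f ∈ Metric.closedBall (0 : X →L[ℝ] ℝ) 1,
      ∀ i < k, f ∈ side (fun n f => f (x n)) r s (σ i) i) (a : ℕ → ℝ) :
    (s - r) / 2 * ∑ i ∈ Finset.range k, |a i| ≤ ‖∑ i ∈ Finset.range k, a i • x i‖ := by
  obtain ⟨f₁, hf₁, h₁⟩ := h fun i => decide (0 ≤ a i)
  obtain ⟨f₂, hf₂, h₂⟩ := h fun i => decide (a i < 0)
  set y := ∑ i ∈ Finset.range k, a i • x i
  have hterm : ∀ i ∈ Finset.range k, (s - r) * |a i| ≤ a i * (f₁ (x i) - f₂ (x i)) := by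
    intro i hi
    have h₁ := h₁ i (Finset.mem_range.1 hi)
    have h₂ := h₂ i (Finset.mem_range.1 hi)
    rcases le_or_gt 0 (a i) with ha | ha
    · simp only [side, ha, not_lt.2 ha, decide_true, decide_false, if_true, if_false,
        Bool.false_eq_true, mem_ofPred_eq] at h₁ h₂
      rw [abs_of_nonneg ha]
      nlinarith
    · simp only [side, ha, not_le.2 ha, decide_true, decide_false, if_true, if_false,
        Bool.false_eq_true, mem_ofPred_eq] at h₁ h₂
      rw [abs_of_neg ha]
      nlinarith
  have hdual : ∀ f ∈ Metric.closedBall (0 : X →L[ℝ] ℝ) 1, |f y| ≤ ‖y‖ := fun f hf =>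
    (f.le_opNorm y).trans (mul_le_of_le_one_left (norm_nonneg _) (mem_closedBall_zero_iff.1 hf))
  have h₁y := abs_le.1 (hdual f₁ hf₁)
  have h₂y := abs_le.1 (hdual f₂ hf₂)
  have := calc (s - r) * ∑ i ∈ Finset.range k, |a i|
      = ∑ i ∈ Finset.range k, (s - r) * |a i| := Finset.mul_sum _ _ _
    _ ≤ ∑ i ∈ Finset.range k, a i * (f₁ (x i) - f₂ (x i)) := Finset.sum_le_sum hterm
    _ = f₁ y - f₂ y := by simp [y, map_sum, mul_sub, Finset.sum_sub_distrib]
    _ ≤ 2 * ‖y‖ := by linarith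
  linarith

theorem exists_strictMono_mul_sum_abs_le_norm_sum_smul {x : ℕ → X}
    (h : ∀ M : Set ℕ, M.Infinite → ∃ f ∈ Metric.closedBall (0 : X →L[ℝ] ℝ) 1, ∃ r s : ℚ,
      (r : ℝ) < s ∧ Oscillates (fun n f => f (x n)) r s M f) :
    ∃ δ > 0, ∃ φ : ℕ → ℕ, StrictMono φ ∧ ∀ k (a : ℕ → ℝ),
      δ * ∑ i ∈ Finset.range k, |a i| ≤ ‖∑ i ∈ Finset.range k, a i • x (φ i)‖ := by
  obtain ⟨r, s, hrs, M, hM, hC⟩ := exists_rat_hereditarilyOscillating h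
  obtain ⟨φ, hφ, hind⟩ := hC.exists_strictMono_forall_exists_mem_side hM
  exact ⟨(s - r) / 2, by linarith, φ, hφ, fun k a => mul_sum_abs_le_norm_sum_smul (hind k) a⟩

theorem hasSum_norm_ellOne (a : EllOne) : HasSum (fun i => ‖a i‖) ‖a‖ := by
  simpa using lp.hasSum_norm (p := 1) (by norm_num) a

variable [CompleteSpace X]

theorem summable_ellOne_smul {y : ℕ → X} {C : ℝ} (hy : ∀ i, ‖y i‖ ≤ C) (a : EllOne) :
    Summable fun i => a i • y i :=
  .of_norm_bounded ((hasSum_norm_ellOne a).summable.mul_right C) fun i =>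
    (norm_smul_le _ _).trans (mul_le_mul_of_nonneg_left (hy i) (norm_nonneg _))

noncomputable def ellOneSum (y : ℕ → X) {C : ℝ} (hy : ∀ i, ‖y i‖ ≤ C) : EllOne →L[ℝ] X :=
  LinearMap.mkContinuous
    { toFun := fun a => ∑' i, a i • y i
      map_add' := fun a b => by
        simpa [add_smul] using (summable_ellOne_smul hy a).tsum_add (summable_ellOne_smul hy b)
      map_smul' := fun c a => by
        simpa [smul_smul] using (summable_ellOne_smul hy a).tsum_const_smul c }
    C fun a => by
      rw [mul_comm]
      exact tsum_of_norm_bounded ((hasSum_norm_ellOne a).mul_right C) fun i =>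
        (norm_smul_le _ _).trans (mul_le_mul_of_nonneg_left (hy i) (norm_nonneg _))

theorem hasSum_ellOneSum {y : ℕ → X} {C : ℝ} (hy : ∀ i, ‖y i‖ ≤ C) (a : EllOne) :
    HasSum (fun i => a i • y i) (ellOneSum y hy a) :=
  (summable_ellOne_smul hy a).hasSum

theorem exists_isClosed_subspace_equiv_ellOne {X₀ : Subspace ℝ X} (hX₀ : IsClosed (X₀ : Set X))
    {y : ℕ → X} (hyX₀ : ∀ i, y i ∈ X₀) {C : ℝ} (hy : ∀ i, ‖y i‖ ≤ C) {δ : ℝ} (hδ : 0 < δ)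
    (hlow : ∀ k (a : ℕ → ℝ), δ * ∑ i ∈ Finset.range k, |a i| ≤ ‖∑ i ∈ Finset.range k, a i • y i‖) :
    ∃ Z : Subspace ℝ X, Z ≤ X₀ ∧ IsClosed (Z : Set X) ∧ Nonempty (Z ≃L[ℝ] EllOne) := by
  set T := ellOneSum y hy
  have hT a := (hasSum_ellOneSum hy a).tendsto_sum_nat
  have hanti : AntilipschitzWith (Real.toNNReal δ⁻¹) T := T.antilipschitz_of_bound fun a => by
    have : δ * ‖a‖ ≤ ‖T a‖ := le_of_tendsto_of_tendsto'
      ((hasSum_norm_ellOne a).tendsto_sum_nat.const_mul δ) (hT a).norm fun k => by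
        simpa using hlow k a
    rw [Real.coe_toNNReal _ (inv_pos.2 hδ).le, inv_mul_eq_div, le_div_iff₀ hδ]
    linarith
  have hclosed : IsClosed (range T) := hanti.isClosed_range T.uniformContinuous
  refine ⟨LinearMap.range (T : EllOne →ₗ[ℝ] X), ?_,
    by rwa [LinearMap.coe_range, ContinuousLinearMap.coe_coe],
    ⟨(T.equivRange hanti.injective hclosed).symm⟩⟩
  rintro _ ⟨a, rfl⟩
  exact hX₀.mem_of_tendsto (hT a)
    (Eventually.of_forall fun k => X₀.sum_mem fun i _ => X₀.smul_mem _ (hyX₀ i))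

end Banach

/-- Every Banach space with the Schur property is hereditarily-ℓ¹. -/
theorem stmt18 (X : Type*) [NormedAddCommGroup X] [NormedSpace ℝ X] [CompleteSpace X]
    (hX : SchurProperty X) : HereditarilyEllOne X := by
  intro X₀ hX₀ hinf
  obtain ⟨R, u, -, hu, hsep⟩ := exists_seq_norm_le_one_le_norm_sub hinf
  obtain ⟨δ, hδ, φ, -, hφ⟩ := exists_strictMono_mul_sum_abs_le_norm_sum_smul fun M hM =>
    hX.exists_oscillates (x := fun n => (u n : X)) hu one_pos hsep hM
  exact exists_isClosed_subspace_equiv_ellOne hX₀ (fun i => (u (φ i)).2) (fun i => hu (φ i)) hδ hφ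
end
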